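/- Let G be a graph whose vertices all have degree at most d, let A be a finite set of vertices with |∂A| < ε|A| where ∂A is the set of vertices of A adjacent to a vertex outside A, and let B ⊆ A with |B| > (1−ε)|A|. Then |∂B| < (d+1)·(ε/(1−ε))·|B|. -/

import Mathlib

/-!
A boundary vertex `x` of `B` has a neighbour `y ∉ B`. Either `y ∉ A`, and then `x ∈ ∂A`, or
`y ∈ A \ B`, and then `x` is one of the at most `d` neighbours of `y`. Hence
`|∂B| ≤ |∂A| + d |A \ B| < ε|A| + dε|A|`, and `|A| < |B| / (1 - ε)`.
-/

open Finset

/-- The inner vertex boundary of a finite vertex set: vertices of `F`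
adjacent to some vertex outside `F`. -/
def innerBoundary {V : Type*} [Fintype V] [DecidableEq V] (G : SimpleGraph V)
    [DecidableRel G.Adj] (F : Finset V) : Finset V :=
  F.filter (fun x => ∃ y ∉ F, G.Adj x y)

namespace SimpleGraph

variable {V : Type*} [Fintype V] [DecidableEq V] (G : SimpleGraph V) [DecidableRel G.Adj]

theorem innerBoundary_subset_union_biUnion_neighborFinset {A B : Finset V} (hBA : B ⊆ A) :
    innerBoundary G B ⊆ innerBoundary G A ∪ (A \ B).biUnion fun y => G.neighborFinset y := by
  intro x hx
  obtain ⟨hxB, y, hyB, hxy⟩ := mem_filter.1 hx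
  by_cases hyA : y ∈ A
  · exact mem_union_right _ <|
      mem_biUnion.2 ⟨y, mem_sdiff.2 ⟨hyA, hyB⟩, (G.mem_neighborFinset _ _).2 hxy.symm⟩
  · exact mem_union_left _ <| mem_filter.2 ⟨hBA hxB, y, hyA, hxy⟩

theorem card_innerBoundary_le_of_subset {d : ℕ} (hdeg : ∀ v, G.degree v ≤ d) {A B : Finset V}
    (hBA : B ⊆ A) : #(innerBoundary G B) ≤ #(innerBoundary G A) + #(A \ B) * d :=
  calc #(innerBoundary G B)
      ≤ #(innerBoundary G A ∪ (A \ B).biUnion fun y => G.neighborFinset y) :=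
        card_le_card (G.innerBoundary_subset_union_biUnion_neighborFinset hBA)
    _ ≤ #(innerBoundary G A) + #((A \ B).biUnion fun y => G.neighborFinset y) := card_union_le _ _
    _ ≤ #(innerBoundary G A) + #(A \ B) * d := by
        gcongr
        exact card_biUnion_le_card_mul _ _ _ fun v _ =>
          (G.card_neighborFinset_eq_degree v).trans_le (hdeg v)

end SimpleGraph

theorem boundary_of_large_subset {V : Type*} [Fintype V] [DecidableEq V]
    (G : SimpleGraph V) [DecidableRel G.Adj] (d : ℕ)
    (hdeg : ∀ v, G.degree v ≤ d) (ε : ℝ) (hε0 : 0 < ε) (hε1 : ε < 1)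
    (A B : Finset V) (hBA : B ⊆ A)
    (hA : ((innerBoundary G A).card : ℝ) < ε * A.card)
    (hB : (1 - ε) * A.card < (B.card : ℝ)) :
    ((innerBoundary G B).card : ℝ) < (d + 1) * (ε / (1 - ε)) * B.card := by
  have hε : 0 < 1 - ε := sub_pos.2 hε1
  have hbound : ((innerBoundary G B).card : ℝ) ≤
      (innerBoundary G A).card + (A.card - B.card) * d := by
    rw [← Nat.cast_sub (card_le_card hBA), ← card_sdiff_of_subset hBA]
    exact_mod_cast G.card_innerBoundary_le_of_subset hdeg hBA
  have hsdiff : (A.card : ℝ) - B.card < ε * A.card := by linarith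
  have hA_lt : (A.card : ℝ) < B.card / (1 - ε) := by rwa [lt_div_iff₀ hε, mul_comm]
  calc ((innerBoundary G B).card : ℝ)
      < ε * A.card + ε * A.card * d := by nlinarith [(Nat.cast_nonneg d : (0 : ℝ) ≤ d)]
    _ = (d + 1) * ε * A.card := by ring
    _ < (d + 1) * ε * (B.card / (1 - ε)) := by gcongr
    _ = (d + 1) * (ε / (1 - ε)) * B.card := by field_simp
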